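/- Let n ≥ 4 and 2 ≤ k ≤ n−2 be integers. Let β : {0,1,…,n} → ℕ satisfy β(0) = β(n) = 1 and β(i) = β(n−i) for all 0 ≤ i ≤ n. Define M, M' : {0,1,…,n} → ℕ by M(j) = 1 if j ∈ {0, k, n} and M(j) = 0 otherwise, and M'(j) = 1 if j ∈ {0, n−k, n} and M'(j) = 0 otherwise. Suppose both M and M' satisfy the Morse inequalities with respect to β, i.e. for every 0 ≤ j ≤ n one has Σ_{i=0}^{j} (−1)^{j−i} M(i) ≥ Σ_{i=0}^{j} (−1)^{j−i} β(i) and Σ_{i=0}^{j} (−1)^{j−i} M'(i) ≥ Σ_{i=0}^{j} (−1)^{j−i} β(i), with equality in both cases when j = n. Then n is even and k = n/2. -/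
import Mathlib


open Finset

private lemma alt_sum_step (m : ℕ) (g : ℕ → ℤ) :
    ∑ i ∈ Finset.range (m + 2), (-1 : ℤ) ^ (m + 1 - i) * g i
      = g (m + 1) - ∑ i ∈ Finset.range (m + 1), (-1 : ℤ) ^ (m - i) * g i := by
  rw [Finset.sum_range_succ]
  have h : ∑ i ∈ Finset.range (m + 1), (-1 : ℤ) ^ (m + 1 - i) * g i
      = ∑ i ∈ Finset.range (m + 1), -((-1 : ℤ) ^ (m - i) * g i) := by
    apply Finset.sum_congr rfl
    intro i hi
    have hi' : i ≤ m := by simpa [Nat.lt_succ_iff] using hi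
    have : m + 1 - i = (m - i) + 1 := by omega
    rw [this, pow_succ]
    ring
  rw [h, Finset.sum_neg_distrib]
  simp
  ring

private lemma weak_morse (n : ℕ) (b f : ℕ → ℤ)
    (h : ∀ j ≤ n, (∑ i ∈ Finset.range (j + 1), (-1 : ℤ) ^ (j - i) * b i) ≤
        ∑ i ∈ Finset.range (j + 1), (-1 : ℤ) ^ (j - i) * f i) :
    ∀ j ≤ n, b j ≤ f j := by
  intro j hj
  cases j with
  | zero => have := h 0 (by omega); simpa using this
  | succ m =>
    have h1 := h m (by omega)
    have h2 := h (m + 1) hj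
    rw [alt_sum_step m b, alt_sum_step m f] at h2
    linarith

/-- arithmetic core of the "one saddle forces `n = 2k`"
argument.  Let `n ≥ 4`, `2 ≤ k ≤ n-2`, and let `β : {0,…,n} → ℕ` satisfy
`β 0 = β n = 1` and Poincaré duality `β i = β (n-i)`.  Let `Mo` count one point
in each of the indices `0, k, n` and `Mo'` one point in each of `0, n-k, n`.
If both `Mo` and `Mo'` satisfy the Morse inequalities with respect to `β`
(with equality of the alternating sums at `j = n`), then `n` is even and
`k = n/2`. -/
theorem morse_inequalities_single_saddle
    {n k : ℕ} (hn : 4 ≤ n) (hk2 : 2 ≤ k) (hkn : k ≤ n - 2)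
    (β : ℕ → ℕ) (hβ0 : β 0 = 1) (hβn : β n = 1)
    (hdual : ∀ i ≤ n, β i = β (n - i))
    (Mo Mo' : ℕ → ℕ)
    (hMo : ∀ j, Mo j = if j = 0 ∨ j = k ∨ j = n then 1 else 0)
    (hMo' : ∀ j, Mo' j = if j = 0 ∨ j = n - k ∨ j = n then 1 else 0)
    (hineq : ∀ j ≤ n,
      (∑ i ∈ Finset.range (j + 1), (-1 : ℤ) ^ (j - i) * (β i : ℤ)) ≤
        ∑ i ∈ Finset.range (j + 1), (-1 : ℤ) ^ (j - i) * (Mo i : ℤ))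
    (hineq' : ∀ j ≤ n,
      (∑ i ∈ Finset.range (j + 1), (-1 : ℤ) ^ (j - i) * (β i : ℤ)) ≤
        ∑ i ∈ Finset.range (j + 1), (-1 : ℤ) ^ (j - i) * (Mo' i : ℤ))
    (heq : (∑ i ∈ Finset.range (n + 1), (-1 : ℤ) ^ (n - i) * (Mo i : ℤ)) =
        ∑ i ∈ Finset.range (n + 1), (-1 : ℤ) ^ (n - i) * (β i : ℤ))
    (heq' : (∑ i ∈ Finset.range (n + 1), (-1 : ℤ) ^ (n - i) * (Mo' i : ℤ)) =
        ∑ i ∈ Finset.range (n + 1), (-1 : ℤ) ^ (n - i) * (β i : ℤ)) :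
    Even n ∧ k = n / 2 := by
  -- weak Morse inequalities
  have w : ∀ j ≤ n, (β j : ℤ) ≤ (Mo j : ℤ) :=
    weak_morse n (fun i => (β i : ℤ)) (fun i => (Mo i : ℤ)) hineq
  have w' : ∀ j ≤ n, (β j : ℤ) ≤ (Mo' j : ℤ) :=
    weak_morse n (fun i => (β i : ℤ)) (fun i => (Mo' i : ℤ)) hineq'
  by_cases hc : k = n - k
  · -- n = 2k
    have h2k : n = 2 * k := by omega
    exact ⟨⟨k, by omega⟩, by omega⟩
  · exfalso
    -- β k = 0 since Mo' k = 0
    have hk0 : β k = 0 := by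
      have h1 := w' k (by omega)
      have h2 : Mo' k = 0 := by
        rw [hMo']
        have : ¬ (k = 0 ∨ k = n - k ∨ k = n) := by omega
        simp [this]
      rw [h2] at h1
      omega
    -- Mo i = β i for i ≤ n, i ≠ k
    have hsame : ∀ i ≤ n, i ≠ k → (Mo i : ℤ) = (β i : ℤ) := by
      intro i hi hik
      rcases Nat.eq_zero_or_pos i with h0 | hpos
      · subst h0; rw [hMo]; simp [hβ0]
      by_cases hin : i = n
      · subst hin; rw [hMo]; simp [hβn]
      · have : Mo i = 0 := by
          rw [hMo]
          have : ¬ (i = 0 ∨ i = k ∨ i = n) := by omega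
          simp [this]
        have hb := w i hi
        rw [this] at hb ⊢
        have : (β i : ℤ) = 0 := le_antisymm hb (by positivity)
        omega
    -- the difference of the Euler sums equals (-1)^(n-k)
    have hdiffsum :
        ∑ i ∈ Finset.range (n + 1), (-1 : ℤ) ^ (n - i) * (Mo i : ℤ)
          - ∑ i ∈ Finset.range (n + 1), (-1 : ℤ) ^ (n - i) * (β i : ℤ)
        = ∑ i ∈ Finset.range (n + 1), (-1 : ℤ) ^ (n - i) * ((Mo i : ℤ) - (β i : ℤ)) := by
      rw [← Finset.sum_sub_distrib]
      apply Finset.sum_congr rfl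
      intro i _
      ring
    have hsingle :
        ∑ i ∈ Finset.range (n + 1), (-1 : ℤ) ^ (n - i) * ((Mo i : ℤ) - (β i : ℤ))
        = (-1 : ℤ) ^ (n - k) := by
      rw [Finset.sum_eq_single k]
      · have hMok : Mo k = 1 := by rw [hMo]; simp
        rw [hMok, hk0]
        ring
      · intro i hi hik
        have hi' : i ≤ n := by simpa [Nat.lt_succ_iff] using hi
        rw [hsame i hi' hik]
        ring
      · intro hk
        exact absurd (Finset.mem_range.mpr (by omega : k < n + 1)) hk
    have : (-1 : ℤ) ^ (n - k) = 0 := by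
      rw [← hsingle, ← hdiffsum, heq]
      ring
    exact pow_ne_zero _ (by norm_num) this
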